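/- Let L ∈ K[z,∂_z] and assume that V_1(L) is a finite-dimensional K-vector space of positive dimension. Then for every positive integer n, the left ideal I_n(L) is nonzero, i.e. there exists a nonzero operator R ∈ K[z,∂_z] with R·g ∈ K[z] for all g ∈ V_n(L). -/

import Mathlib

open Polynomial

/-- Formal Laurent-type series in `1/z`: the function records the coefficient of `z^{-k}`. -/
abbrev LS (K : Type*) := ℤ → K

variable {K : Type*} [Field K]

/-- membership in `(1/z)·K[[1/z]]`: no terms `z^{-k}` with `k ≤ 0`. -/
def InTail (f : LS K) : Prop := ∀ k : ℤ, k ≤ 0 → f k = 0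

/-- The Laurent-series representation of a polynomial `P ∈ K[z]`. -/
noncomputable def ofPoly (P : Polynomial K) : LS K := fun k => if k ≤ 0 then P.coeff (-k).toNat else 0

/-- `f` is (the Laurent expansion of) a polynomial in `z`. -/
def IsPol (f : LS K) : Prop := ∃ P : Polynomial K, f = ofPoly P

/-- Multiplication by `z`. -/
def zmul (f : LS K) : LS K := fun k => f (k + 1)

/-- The derivation `∂_z`. -/
noncomputable def dz (f : LS K) : LS K := fun k => ((1 - k : ℤ) : K) * f (k - 1)

/-- Multiplication by a polynomial `P(z)`. -/
noncomputable def pmul (P : Polynomial K) (f : LS K) : LS K :=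
  fun k => ∑ i ∈ Finset.range (P.natDegree + 1), P.coeff i * f (k + i)

/-- The projection `π` deleting the polynomial part. -/
def piProj (f : LS K) : LS K := fun k => if 1 ≤ k then f k else 0

/-- The action of the differential operator `L = ∑_{j=0}^m (-1)^j a_j(z) ∂_z^j`. -/
noncomputable def Wact (m : ℕ) (a : ℕ → Polynomial K) (f : LS K) : LS K :=
  ∑ j ∈ Finset.range (m + 1), ((-1 : K) ^ j) • pmul (a j) (dz^[j] f)

/-- The formal adjoint `L*` acting on `K[t]`: `L*·P = ∑_j (d/dt)^j (a_j(t)·P(t))`. -/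
noncomputable def Wadj (m : ℕ) (a : ℕ → Polynomial K) (P : Polynomial K) : Polynomial K :=
  ∑ j ∈ Finset.range (m + 1), Polynomial.derivative^[j] (a j * P)

/-- The formal `f`-integration transform `φ_f : K[t] → K`, `φ_f(t^k) = f_k`. -/
noncomputable def phi (f : LS K) (P : Polynomial K) : K :=
  ∑ i ∈ Finset.range (P.natDegree + 1), P.coeff i * f ((i : ℤ) + 1)

/-- `V_1` of an operator given through its action `T`. -/
def V1A (T : LS K → LS K) : Set (LS K) := {f | InTail f ∧ IsPol (T f)}

/-- `V_n` of an operator given through its action `T`. -/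
noncomputable def VnA (T : LS K → LS K) (n : ℕ) : Submodule K (LS K) :=
  Submodule.span K {g | ∃ k < n, ∃ f ∈ V1A T, g = piProj (zmul^[k] f)}

/-- `φ_f((P(z)-P(t))/(z-t))`, an element of `K[z]` (φ_f applied in the variable `t`). -/
noncomputable def Qof (f : LS K) (P : Polynomial K) : Polynomial K :=
  ∑ u ∈ Finset.range P.natDegree,
    Polynomial.C (∑ k ∈ Finset.Icc (u + 1) P.natDegree, P.coeff k * f ((k - u : ℕ) : ℤ)) *
      Polynomial.X ^ u

/-- The order `ord_{(1,-1)}(L) = max_j (deg a_j - j)`. -/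
noncomputable def ordW (m : ℕ) (a : ℕ → Polynomial K) : ℤ :=
  (Finset.range (m + 1)).sup' ⟨0, Finset.mem_range.mpr (Nat.succ_pos m)⟩ fun j => ((a j).natDegree : ℤ) - j

/-- Property (P) of the operator `L = ∑_j (-1)^j a_j(z) ∂_z^j` relative to `d`. -/
def PropP (m : ℕ) (a : ℕ → Polynomial K) (d : ℕ) : Prop :=
  ∀ k : ℕ,
    ∑ j ∈ (Finset.range (m + 1)).filter (fun j => ((a j).natDegree : ℤ) - j = d),
        (a j).leadingCoeff * (ascPochhammer K ((a j).natDegree)).eval ((k : K) + d + 1) ≠ 0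


section AuxiliaryLemmas

/-! ### Basic lemmas about `pmul` -/

lemma pmul_apply (P : Polynomial K) (f : LS K) (k : ℤ) :
    pmul P f k = ∑ i ∈ Finset.range (P.natDegree + 1), P.coeff i * f (k + i) := rfl

lemma pmul_eq_sum_range {P : Polynomial K} {N : ℕ} (hN : P.natDegree < N) (f : LS K) (k : ℤ) :
    pmul P f k = ∑ i ∈ Finset.range N, P.coeff i * f (k + i) := by
  rw [pmul_apply]
  refine Finset.sum_subset (Finset.range_subset_range.2 hN) fun i _ hi => ?_
  rw [Finset.mem_range, not_lt] at hi
  rw [Polynomial.coeff_eq_zero_of_natDegree_lt (by omega), zero_mul]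

lemma pmul_zero_left (f : LS K) : pmul (0 : Polynomial K) f = 0 := by
  funext k; simp [pmul]

lemma pmul_zero_right (P : Polynomial K) : pmul P (0 : LS K) = 0 := by
  funext k; simp [pmul]

lemma pmul_add_right (P : Polynomial K) (f g : LS K) :
    pmul P (f + g) = pmul P f + pmul P g := by
  funext k
  simp [pmul, mul_add, Finset.sum_add_distrib]

lemma pmul_smul_right (P : Polynomial K) (r : K) (f : LS K) :
    pmul P (r • f) = r • pmul P f := by
  funext k
  simp only [pmul, Pi.smul_apply, smul_eq_mul, Finset.mul_sum]
  exact Finset.sum_congr rfl fun i _ => by ring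

lemma pmul_smul_left (r : K) (P : Polynomial K) (f : LS K) :
    pmul (r • P) f = r • pmul P f := by
  funext k
  rw [Pi.smul_apply, smul_eq_mul,
    pmul_eq_sum_range (Nat.lt_succ_of_le (Polynomial.natDegree_smul_le r P)) f k,
    pmul_apply, Finset.mul_sum]
  refine Finset.sum_congr rfl fun i _ => ?_
  rw [Polynomial.coeff_smul, smul_eq_mul, mul_assoc]

lemma pmul_neg_left (P : Polynomial K) (f : LS K) : pmul (-P) f = -(pmul P f) := by
  rw [← neg_one_smul K P, pmul_smul_left, neg_one_smul]

lemma pmul_add_left (P Q : Polynomial K) (f : LS K) :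
    pmul (P + Q) f = pmul P f + pmul Q f := by
  funext k
  have h1 : (P + Q).natDegree < P.natDegree + Q.natDegree + 1 :=
    Nat.lt_succ_of_le ((Polynomial.natDegree_add_le P Q).trans
      (max_le (Nat.le_add_right _ _) (Nat.le_add_left _ _)))
  have h2 : P.natDegree < P.natDegree + Q.natDegree + 1 := by omega
  have h3 : Q.natDegree < P.natDegree + Q.natDegree + 1 := by omega
  rw [Pi.add_apply, pmul_eq_sum_range h1 f k, pmul_eq_sum_range h2 f k,
    pmul_eq_sum_range h3 f k, ← Finset.sum_add_distrib]
  exact Finset.sum_congr rfl fun i _ => by rw [Polynomial.coeff_add, add_mul]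

lemma pmul_sub_left (P Q : Polynomial K) (f : LS K) :
    pmul (P - Q) f = pmul P f - pmul Q f := by
  rw [sub_eq_add_neg, pmul_add_left, pmul_neg_left, ← sub_eq_add_neg]

lemma pmul_one (f : LS K) : pmul (1 : Polynomial K) f = f := by
  funext k
  rw [pmul_apply, Polynomial.natDegree_one, Finset.sum_range_one]
  simp

lemma pmul_sum_left {ι : Type*} (s : Finset ι) (P : ι → Polynomial K) (f : LS K) :
    pmul (∑ i ∈ s, P i) f = ∑ i ∈ s, pmul (P i) f := by
  induction s using Finset.cons_induction with
  | empty => simp [pmul_zero_left]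
  | cons a s ha ih => rw [Finset.sum_cons, Finset.sum_cons, pmul_add_left, ih]

lemma pmul_finset_sum {ι : Type*} (P : Polynomial K) (s : Finset ι) (G : ι → LS K) :
    pmul P (∑ i ∈ s, G i) = ∑ i ∈ s, pmul P (G i) := by
  funext k
  rw [pmul_apply, Finset.sum_apply]
  have h1 : ∀ i ∈ Finset.range (P.natDegree + 1),
      P.coeff i * (∑ j ∈ s, G j) (k + i) = ∑ j ∈ s, P.coeff i * G j (k + i) := by
    intro i _
    rw [Finset.sum_apply, Finset.mul_sum]
  rw [Finset.sum_congr rfl h1, Finset.sum_comm]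
  exact Finset.sum_congr rfl fun j _ => (pmul_apply P (G j) k).symm

lemma pmul_mul_X (Q : Polynomial K) (f : LS K) :
    pmul (Q * Polynomial.X) f = zmul (pmul Q f) := by
  funext k
  have h1 : (Q * Polynomial.X).natDegree < Q.natDegree + 1 + 1 :=
    Nat.lt_succ_of_le (Polynomial.natDegree_mul_le.trans
      (by rw [Polynomial.natDegree_X]))
  rw [pmul_eq_sum_range h1 f k, Finset.sum_range_succ']
  have hc0 : (Q * Polynomial.X).coeff 0 = 0 := by
    rw [← pow_one (Polynomial.X (R := K)), Polynomial.coeff_mul_X_pow']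
    simp
  rw [hc0, zero_mul, add_zero]
  have hz : zmul (pmul Q f) k = pmul Q f (k + 1) := rfl
  rw [hz, pmul_apply]
  refine Finset.sum_congr rfl fun i _ => ?_
  rw [Polynomial.coeff_mul_X]
  congr 2
  push_cast
  ring

lemma pmul_mul_X_pow (Q : Polynomial K) (u : ℕ) (f : LS K) :
    pmul (Q * Polynomial.X ^ u) f = zmul^[u] (pmul Q f) := by
  induction u with
  | zero => rw [pow_zero, mul_one]; rfl
  | succ u ih =>
    rw [pow_succ, ← mul_assoc, pmul_mul_X, ih]
    exact (Function.iterate_succ_apply' zmul u (pmul Q f)).symm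

lemma pmul_X_pow (u : ℕ) (f : LS K) : pmul (Polynomial.X ^ u) f = zmul^[u] f := by
  have h := pmul_mul_X_pow (1 : Polynomial K) u f
  rw [one_mul, pmul_one] at h
  exact h

lemma pmul_zmul (P : Polynomial K) (f : LS K) :
    pmul P (zmul f) = zmul (pmul P f) := by
  funext k
  have h1 : zmul (pmul P f) k = pmul P f (k + 1) := rfl
  rw [h1, pmul_apply, pmul_apply]
  refine Finset.sum_congr rfl fun i _ => ?_
  have h2 : zmul f (k + (i : ℤ)) = f (k + i + 1) := rfl
  rw [h2]
  congr 2
  ring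

lemma pmul_zmul_iter (P : Polynomial K) (u : ℕ) (f : LS K) :
    pmul P (zmul^[u] f) = zmul^[u] (pmul P f) := by
  induction u with
  | zero => rfl
  | succ u ih =>
    rw [Function.iterate_succ_apply', pmul_zmul, ih]
    exact (Function.iterate_succ_apply' zmul u (pmul P f)).symm

lemma pmul_mul (P Q : Polynomial K) (f : LS K) :
    pmul (P * Q) f = pmul P (pmul Q f) := by
  induction Q using Polynomial.induction_on' with
  | add q r hq hr =>
    rw [mul_add, pmul_add_left, pmul_add_left, pmul_add_right, hq, hr]
  | monomial u r =>
    rw [← Polynomial.C_mul_X_pow_eq_monomial, ← Polynomial.smul_eq_C_mul, mul_smul_comm,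
      pmul_smul_left, pmul_smul_left, pmul_smul_right, pmul_mul_X_pow, pmul_X_pow,
      pmul_zmul_iter]

lemma zmul_iter_apply (u : ℕ) (f : LS K) (k : ℤ) : zmul^[u] f k = f (k + u) := by
  induction u generalizing f k with
  | zero => simp
  | succ u ih =>
    rw [Function.iterate_succ_apply, ih (zmul f) k]
    show f (k + (u : ℤ) + 1) = f (k + ((u + 1 : ℕ) : ℤ))
    congr 1
    push_cast
    ring

/-! ### Basic lemmas about `dz` -/

lemma dz_add (f g : LS K) : dz (f + g) = dz f + dz g := by
  funext k; simp [dz, mul_add]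

lemma dz_smul (r : K) (f : LS K) : dz (r • f) = r • dz f := by
  funext k
  simp only [dz, Pi.smul_apply, smul_eq_mul]
  ring

lemma dz_zero : dz (0 : LS K) = 0 := by
  funext k; simp [dz]

lemma dz_finset_sum {ι : Type*} (s : Finset ι) (F : ι → LS K) :
    dz (∑ i ∈ s, F i) = ∑ i ∈ s, dz (F i) := by
  funext k
  simp only [dz, Finset.sum_apply, Finset.mul_sum]

lemma dzIter_add (j : ℕ) (f g : LS K) : dz^[j] (f + g) = dz^[j] f + dz^[j] g := by
  induction j with
  | zero => rfl
  | succ j ih =>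
    rw [Function.iterate_succ_apply', Function.iterate_succ_apply',
      Function.iterate_succ_apply', ih, dz_add]

lemma dzIter_smul (j : ℕ) (r : K) (f : LS K) : dz^[j] (r • f) = r • dz^[j] f := by
  induction j with
  | zero => rfl
  | succ j ih =>
    rw [Function.iterate_succ_apply', Function.iterate_succ_apply', ih, dz_smul]

lemma dzIter_zero (j : ℕ) : dz^[j] (0 : LS K) = 0 := by
  induction j with
  | zero => rfl
  | succ j ih => rw [Function.iterate_succ_apply', ih, dz_zero]

/-- Leibniz rule. -/
lemma dz_pmul (P : Polynomial K) (f : LS K) :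
    dz (pmul P f) = pmul (Polynomial.derivative P) f + pmul P (dz f) := by
  funext k
  have hd : (Polynomial.derivative P).natDegree < P.natDegree + 1 :=
    Nat.lt_succ_of_le ((Polynomial.natDegree_derivative_le P).trans (Nat.sub_le _ _))
  rw [Pi.add_apply, pmul_eq_sum_range hd f k]
  show ((1 - k : ℤ) : K) * pmul P f (k - 1) = _
  rw [pmul_apply, pmul_apply, Finset.mul_sum]
  have e1 : ∀ i ∈ Finset.range (P.natDegree + 1),
      (Polynomial.derivative P).coeff i * f (k + i)
        = P.coeff (i + 1) * ((i : K) + 1) * f (k + i) := by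
    intro i _
    rw [Polynomial.coeff_derivative]
  have e2 : ∀ i ∈ Finset.range (P.natDegree + 1),
      P.coeff i * dz f (k + i) = P.coeff i * ((1 : K) - (k : K) - (i : K)) * f (k - 1 + i) := by
    intro i _
    show P.coeff i * (((1 - (k + (i : ℤ)) : ℤ) : K) * f (k + (i : ℤ) - 1)) = _
    rw [show k + (i : ℤ) - 1 = k - 1 + (i : ℤ) from by ring]
    push_cast
    ring
  rw [Finset.sum_congr rfl e1, Finset.sum_congr rfl e2]
  have e3 : ∑ i ∈ Finset.range (P.natDegree + 1), P.coeff (i + 1) * ((i : K) + 1) * f (k + i)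
      = ∑ i ∈ Finset.range (P.natDegree + 1), P.coeff i * (i : K) * f (k - 1 + i) := by
    set g : ℕ → K := fun j => P.coeff j * (j : K) * f (k - 1 + j) with hg
    have hgen : ∀ i ∈ Finset.range (P.natDegree + 1),
        P.coeff (i + 1) * ((i : K) + 1) * f (k + i) = g (i + 1) := by
      intro i _
      rw [hg]
      show _ = P.coeff (i + 1) * (((i + 1 : ℕ)) : K) * f (k - 1 + ((i + 1 : ℕ) : ℤ))
      rw [show k - 1 + ((i + 1 : ℕ) : ℤ) = k + (i : ℤ) from by push_cast; ring]
      push_cast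
      ring
    rw [Finset.sum_congr rfl hgen]
    have h4 := Finset.sum_range_succ' g (P.natDegree + 1)
    have h5 := Finset.sum_range_succ g (P.natDegree + 1)
    have hg0 : g 0 = 0 := by simp [hg]
    have hgN : g (P.natDegree + 1) = 0 := by
      have hc : P.coeff (P.natDegree + 1) = 0 :=
        Polynomial.coeff_eq_zero_of_natDegree_lt (Nat.lt_succ_self _)
      simp [hg, hc]
    rw [hg0, add_zero] at h4
    rw [hgN, add_zero] at h5
    exact h4.symm.trans h5
  rw [e3, ← Finset.sum_add_distrib]
  refine Finset.sum_congr rfl fun i _ => ?_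
  push_cast
  ring

/-! ### `ofPoly` and `IsPol` -/

lemma ofPoly_add (P Q : Polynomial K) : ofPoly (P + Q) = ofPoly P + ofPoly Q := by
  funext k
  simp only [ofPoly, Pi.add_apply, Polynomial.coeff_add]
  split_ifs <;> simp

lemma ofPoly_smul (r : K) (P : Polynomial K) : ofPoly (r • P) = r • ofPoly P := by
  funext k
  simp only [ofPoly, Pi.smul_apply, Polynomial.coeff_smul, smul_eq_mul]
  split_ifs <;> simp

lemma isPol_zero : IsPol (0 : LS K) := ⟨0, by funext k; simp [ofPoly]⟩

lemma isPol_add {f g : LS K} (hf : IsPol f) (hg : IsPol g) : IsPol (f + g) := by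
  obtain ⟨P, rfl⟩ := hf
  obtain ⟨Q, rfl⟩ := hg
  exact ⟨P + Q, (ofPoly_add P Q).symm⟩

lemma isPol_smul (r : K) {f : LS K} (hf : IsPol f) : IsPol (r • f) := by
  obtain ⟨P, rfl⟩ := hf
  exact ⟨r • P, (ofPoly_smul r P).symm⟩

lemma isPol_sub {f g : LS K} (hf : IsPol f) (hg : IsPol g) : IsPol (f - g) := by
  rw [sub_eq_add_neg, ← neg_one_smul K g]
  exact isPol_add hf (isPol_smul _ hg)

lemma isPol_sum {ι : Type*} (s : Finset ι) (F : ι → LS K) (h : ∀ i ∈ s, IsPol (F i)) :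
    IsPol (∑ i ∈ s, F i) :=
  Finset.sum_induction F IsPol (fun _ _ => isPol_add) isPol_zero h

lemma pmul_ofPoly (P Q : Polynomial K) : pmul P (ofPoly Q) = ofPoly (P * Q) := by
  funext k
  rw [pmul_apply]
  by_cases hk : k ≤ 0
  · set t := (-k).toNat with ht
    have hRHS : ofPoly (P * Q) k = (P * Q).coeff t := by
      simp only [ofPoly, if_pos hk]
      rfl
    rw [hRHS, Polynomial.coeff_mul, Finset.Nat.sum_antidiagonal_eq_sum_range_succ_mk]
    have hterm : ∀ i : ℕ, P.coeff i * ofPoly Q (k + i)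
        = if i ≤ t then P.coeff i * Q.coeff (t - i) else 0 := by
      intro i
      simp only [ofPoly]
      by_cases hit : i ≤ t
      · have h1 : k + (i : ℤ) ≤ 0 := by omega
        rw [if_pos hit, if_pos h1]
        have h2 : (-(k + (i : ℤ))).toNat = t - i := by omega
        rw [h2]
      · have h1 : ¬(k + (i : ℤ) ≤ 0) := by omega
        rw [if_neg hit, if_neg h1, mul_zero]
    have hL : ∑ i ∈ Finset.range (P.natDegree + 1), P.coeff i * ofPoly Q (k + i)
        = ∑ i ∈ Finset.range (P.natDegree + t + 2),
            if i ≤ t then P.coeff i * Q.coeff (t - i) else 0 := by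
      rw [Finset.sum_congr rfl (fun i _ => hterm i)]
      refine Finset.sum_subset (Finset.range_subset_range.2 (by omega)) fun i _ hi => ?_
      rw [Finset.mem_range, not_lt] at hi
      have hc : P.coeff i = 0 := Polynomial.coeff_eq_zero_of_natDegree_lt (by omega)
      split_ifs <;> simp [hc]
    have hR : ∑ i ∈ Finset.range (t + 1), P.coeff i * Q.coeff (t - i)
        = ∑ i ∈ Finset.range (P.natDegree + t + 2),
            if i ≤ t then P.coeff i * Q.coeff (t - i) else 0 := by
      have hc1 : ∀ i ∈ Finset.range (t + 1), P.coeff i * Q.coeff (t - i)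
          = if i ≤ t then P.coeff i * Q.coeff (t - i) else 0 := by
        intro i hi
        rw [Finset.mem_range] at hi
        rw [if_pos (by omega)]
      rw [Finset.sum_congr rfl hc1]
      refine Finset.sum_subset (Finset.range_subset_range.2 (by omega)) fun i _ hi => ?_
      rw [Finset.mem_range, not_lt] at hi
      rw [if_neg (by omega)]
    rw [hL, hR]
  · have hRHS : ofPoly (P * Q) k = 0 := by simp only [ofPoly, if_neg hk]
    rw [hRHS]
    refine Finset.sum_eq_zero fun i _ => ?_
    have h1 : ¬(k + (i : ℤ) ≤ 0) := by omega
    show P.coeff i * (if k + (i : ℤ) ≤ 0 then Q.coeff (-(k + (i : ℤ))).toNat else 0) = 0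
    rw [if_neg h1, mul_zero]

lemma dz_ofPoly (Q : Polynomial K) : dz (ofPoly Q) = ofPoly (Polynomial.derivative Q) := by
  funext k
  simp only [dz, ofPoly]
  by_cases hk : k ≤ 0
  · rw [if_pos hk, if_pos (by omega : k - 1 ≤ 0), Polynomial.coeff_derivative]
    have h1 : (-(k - 1)).toNat = (-k).toNat + 1 := by omega
    rw [h1]
    have h2 : ((1 - k : ℤ) : K) = (((-k).toNat : ℕ) : K) + 1 := by
      have h3 : (1 - k : ℤ) = ((-k).toNat : ℤ) + 1 := by omega
      rw [h3]
      push_cast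
      ring
    rw [h2]
    ring
  · rw [if_neg hk]
    by_cases h1 : k - 1 ≤ 0
    · rw [if_pos h1]
      have h2 : k = 1 := by omega
      subst h2
      norm_num
    · rw [if_neg h1, mul_zero]

lemma dzIter_ofPoly (j : ℕ) (P : Polynomial K) :
    dz^[j] (ofPoly P) = ofPoly (Polynomial.derivative^[j] P) := by
  induction j generalizing P with
  | zero => rfl
  | succ j ih =>
    rw [Function.iterate_succ_apply, dz_ofPoly, ih, ← Function.iterate_succ_apply]

lemma isPol_of_vanish (h : LS K) (C : ℕ) (h1 : ∀ k : ℤ, 1 ≤ k → h k = 0)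
    (h2 : ∀ k : ℤ, k ≤ -(C : ℤ) → h k = 0) : IsPol h := by
  classical
  refine ⟨∑ i ∈ Finset.range (C + 1), Polynomial.C (h (-(i : ℤ))) * Polynomial.X ^ i, ?_⟩
  have hcoeff : ∀ t : ℕ,
      (∑ i ∈ Finset.range (C + 1), Polynomial.C (h (-(i : ℤ))) * Polynomial.X ^ i).coeff t
        = if t ≤ C then h (-(t : ℤ)) else 0 := by
    intro t
    rw [Polynomial.finset_sum_coeff]
    have hstep : ∀ i ∈ Finset.range (C + 1),
        (Polynomial.C (h (-(i : ℤ))) * Polynomial.X ^ i).coeff t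
          = if t = i then h (-(i : ℤ)) else 0 := by
      intro i _
      exact Polynomial.coeff_C_mul_X_pow _ i t
    rw [Finset.sum_congr rfl hstep]
    rw [Finset.sum_ite_eq (Finset.range (C + 1)) t (fun i => h (-(i : ℤ)))]
    by_cases htC : t ≤ C
    · rw [if_pos (Finset.mem_range.mpr (by omega)), if_pos htC]
    · rw [if_neg (by rw [Finset.mem_range]; omega), if_neg htC]
  funext k
  simp only [ofPoly]
  by_cases hk : k ≤ 0
  · rw [if_pos hk, hcoeff]
    by_cases htC : (-k).toNat ≤ C
    · rw [if_pos htC]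
      congr 1
      omega
    · rw [if_neg htC]
      exact h2 k (by omega)
  · rw [if_neg hk]
    exact h1 k (by omega)

/-! ### Normal forms `NFs` and the representation predicate `WRep` -/

noncomputable def NFs (c : ℕ → Polynomial K) (D : ℕ) (f : LS K) : LS K :=
  ∑ j ∈ Finset.range D, pmul (c j) (dz^[j] f)

def WRep (T : LS K → LS K) (c : ℕ → Polynomial K) (D : ℕ) : Prop :=
  (∀ j, D ≤ j → c j = 0) ∧ ∀ f, T f = NFs c D f

lemma NFs_zero (c : ℕ → Polynomial K) (f : LS K) : NFs c 0 f = 0 := by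
  unfold NFs
  exact Finset.sum_range_zero _

lemma NFs_of_vanish {c : ℕ → Polynomial K} {D D' : ℕ} (hv : ∀ j, D ≤ j → c j = 0)
    (h : D ≤ D') (f : LS K) : NFs c D' f = NFs c D f := by
  unfold NFs
  exact (Finset.sum_subset (Finset.range_subset_range.2 h) fun j _ hj => by
    rw [hv j (by rw [Finset.mem_range, not_lt] at hj; exact hj), pmul_zero_left]).symm

lemma NFs_add_coeff (c₁ c₂ : ℕ → Polynomial K) (D : ℕ) (f : LS K) :
    NFs (fun j => c₁ j + c₂ j) D f = NFs c₁ D f + NFs c₂ D f := by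
  unfold NFs
  rw [← Finset.sum_add_distrib]
  exact Finset.sum_congr rfl fun j _ => pmul_add_left _ _ _

lemma NFs_add_pi (c₁ c₂ : ℕ → Polynomial K) (D : ℕ) (f : LS K) :
    NFs (c₁ + c₂) D f = NFs c₁ D f + NFs c₂ D f :=
  NFs_add_coeff c₁ c₂ D f

lemma NFs_sub_coeff (c₁ c₂ : ℕ → Polynomial K) (D : ℕ) (f : LS K) :
    NFs (fun j => c₁ j - c₂ j) D f = NFs c₁ D f - NFs c₂ D f := by
  unfold NFs
  rw [← Finset.sum_sub_distrib]
  exact Finset.sum_congr rfl fun j _ => pmul_sub_left _ _ _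

lemma NFs_single (P : Polynomial K) (i : ℕ) (f : LS K) :
    NFs (fun j => if j = i then P else 0) (i + 1) f = pmul P (dz^[i] f) := by
  unfold NFs
  rw [Finset.sum_eq_single i]
  · simp
  · intro j _ hj
    simp [hj, pmul_zero_left]
  · intro h
    exact absurd (Finset.self_mem_range_succ i) h

lemma pmul_NFs (P : Polynomial K) (c : ℕ → Polynomial K) (D : ℕ) (h : LS K) :
    pmul P (NFs c D h) = NFs (fun j => P * c j) D h := by
  unfold NFs
  rw [pmul_finset_sum]
  exact Finset.sum_congr rfl fun j _ => (pmul_mul P (c j) _).symm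

lemma NFs_ofPoly_isPol (c : ℕ → Polynomial K) (D : ℕ) (P : Polynomial K) :
    IsPol (NFs c D (ofPoly P)) := by
  unfold NFs
  refine isPol_sum _ _ fun j _ => ?_
  rw [dzIter_ofPoly, pmul_ofPoly]
  exact ⟨_, rfl⟩

lemma WRep_mono {T : LS K → LS K} {c : ℕ → Polynomial K} {D D' : ℕ}
    (hT : WRep T c D) (hv : ∀ j, D' ≤ j → c j = 0) : WRep T c D' := by
  refine ⟨hv, fun f => ?_⟩
  rw [hT.2 f]
  rcases le_total D D' with h | h
  · exact (NFs_of_vanish hT.1 h f).symm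
  · exact NFs_of_vanish hv h f

lemma WRep_pmulP (P : Polynomial K) :
    WRep (pmul P) (fun j => if j = 0 then P else 0) 1 := by
  refine ⟨fun j hj => if_neg (by omega), fun f => ?_⟩
  unfold NFs
  rw [Finset.sum_range_one]
  simp

lemma WRep_lcomp (P : Polynomial K) {T : LS K → LS K} {c : ℕ → Polynomial K} {D : ℕ}
    (hT : WRep T c D) : WRep (fun f => pmul P (T f)) (fun j => P * c j) D := by
  constructor
  · intro j hj
    show P * c j = 0
    rw [hT.1 j hj, mul_zero]
  · intro f
    show pmul P (T f) = NFs (fun j => P * c j) D f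
    rw [hT.2 f, pmul_NFs]

lemma WRep_sub {T S : LS K → LS K} {cT cS : ℕ → Polynomial K} {D : ℕ}
    (hT : WRep T cT D) (hS : WRep S cS D) :
    WRep (fun f => T f - S f) (fun j => cT j - cS j) D := by
  constructor
  · intro j hj
    show cT j - cS j = 0
    rw [hT.1 j hj, hS.1 j hj, sub_zero]
  · intro f
    show T f - S f = NFs (fun j => cT j - cS j) D f
    rw [hT.2 f, hS.2 f, NFs_sub_coeff]

lemma WRep_dzStep {T : LS K → LS K} {c : ℕ → Polynomial K} {D : ℕ} (hT : WRep T c D) :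
    WRep (fun f => dz (T f))
      (fun j => Polynomial.derivative (c j) + if j = 0 then 0 else c (j - 1)) (D + 1) := by
  constructor
  · intro j hj
    show Polynomial.derivative (c j) + (if j = 0 then 0 else c (j - 1)) = 0
    rw [hT.1 j (by omega), map_zero, if_neg (by omega : ¬(j = 0)), hT.1 (j - 1) (by omega),
      add_zero]
  · intro f
    show dz (T f) = _
    rw [hT.2 f]
    unfold NFs
    rw [dz_finset_sum]
    have e1 : ∀ j ∈ Finset.range D, dz (pmul (c j) (dz^[j] f))
        = pmul (Polynomial.derivative (c j)) (dz^[j] f) + pmul (c j) (dz^[j + 1] f) := by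
      intro j _
      rw [dz_pmul]
      congr 1
      rw [Function.iterate_succ_apply']
    rw [Finset.sum_congr rfl e1, Finset.sum_add_distrib]
    have e2 : ∀ j ∈ Finset.range (D + 1),
        pmul (Polynomial.derivative (c j) + if j = 0 then 0 else c (j - 1)) (dz^[j] f)
          = pmul (Polynomial.derivative (c j)) (dz^[j] f)
            + pmul (if j = 0 then 0 else c (j - 1)) (dz^[j] f) :=
      fun j _ => pmul_add_left _ _ _
    rw [Finset.sum_congr rfl e2, Finset.sum_add_distrib]
    have hA : ∑ j ∈ Finset.range (D + 1), pmul (Polynomial.derivative (c j)) (dz^[j] f)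
        = ∑ j ∈ Finset.range D, pmul (Polynomial.derivative (c j)) (dz^[j] f) := by
      rw [Finset.sum_range_succ, hT.1 D le_rfl]
      simp [pmul_zero_left]
    have hB : ∑ j ∈ Finset.range (D + 1), pmul (if j = 0 then 0 else c (j - 1)) (dz^[j] f)
        = ∑ j ∈ Finset.range D, pmul (c j) (dz^[j + 1] f) := by
      rw [Finset.sum_range_succ']
      simp [pmul_zero_left]
    rw [hA, hB]

lemma WRep_dzIter {T : LS K → LS K} {c : ℕ → Polynomial K} {D : ℕ}
    (hT : WRep T c D) (hD : 1 ≤ D) (i : ℕ) :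
    ∃ c', WRep (fun f => dz^[i] (T f)) c' (D + i) ∧ c' (D + i - 1) = c (D - 1) := by
  induction i with
  | zero => exact ⟨c, hT, rfl⟩
  | succ i ih =>
    obtain ⟨c', h1, h2⟩ := ih
    refine ⟨fun j => Polynomial.derivative (c' j) + if j = 0 then 0 else c' (j - 1), ?_, ?_⟩
    · have h3 := WRep_dzStep h1
      have hfe : (fun f => dz^[i + 1] (T f)) = (fun f => dz ((fun f => dz^[i] (T f)) f)) := by
        funext f
        rw [Function.iterate_succ_apply']
      rw [hfe, show D + (i + 1) = D + i + 1 from rfl]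
      exact h3
    · rw [show D + (i + 1) - 1 = D + i from by omega]
      show Polynomial.derivative (c' (D + i)) + (if D + i = 0 then 0 else c' (D + i - 1))
        = c (D - 1)
      rw [h1.1 (D + i) le_rfl, map_zero, if_neg (by omega : ¬(D + i = 0)), zero_add]
      exact h2

/-! ### Pseudo-division modulo the operator `L` -/

lemma red {m : ℕ} {a : ℕ → Polynomial K} {μ : ℕ} {lf : ℕ → Polynomial K}
    (hRep : WRep (Wact m a) lf (μ + 1)) :
    ∀ (d : ℕ) (T : LS K → LS K) (c : ℕ → Polynomial K), WRep T c d →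
      ∃ (e : ℕ) (q : ℕ → Polynomial K) (Dq : ℕ) (y : ℕ → Polynomial K),
        (∀ j, Dq ≤ j → q j = 0) ∧ (∀ j, μ ≤ j → y j = 0) ∧
        ∀ f, pmul (lf μ ^ e) (T f) = NFs q Dq (Wact m a f) + NFs y μ f := by
  intro d
  induction d using Nat.strong_induction_on with
  | _ d IH =>
    intro T c hT
    by_cases hd : d ≤ μ
    · refine ⟨0, fun _ => 0, 0, c, fun j _ => rfl, fun j hj => hT.1 j (by omega), fun f => ?_⟩
      rw [pow_zero, pmul_one, NFs_zero, zero_add, hT.2 f]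
      exact (NFs_of_vanish hT.1 hd f).symm
    · push_neg at hd
      obtain ⟨d', rfl⟩ : ∃ d', d = d' + 1 := ⟨d - 1, by omega⟩
      have hμd' : μ ≤ d' := by omega
      obtain ⟨c₂, hc₂, htop⟩ := WRep_dzIter hRep (by omega) (d' - μ)
      rw [show μ + 1 + (d' - μ) = d' + 1 from by omega] at hc₂
      have htop' : c₂ d' = lf μ := by
        rw [show μ + 1 + (d' - μ) - 1 = d' from by omega,
          show μ + 1 - 1 = μ from by omega] at htop
        exact htop
      have hT₁ : WRep (fun f => pmul (lf μ) (T f) - pmul (c d') (dz^[d' - μ] (Wact m a f)))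
          (fun j => lf μ * c j - c d' * c₂ j) (d' + 1) :=
        WRep_sub (WRep_lcomp _ hT) (WRep_lcomp _ hc₂)
      have hvan : ∀ j, d' ≤ j → lf μ * c j - c d' * c₂ j = 0 := by
        intro j hj
        rcases eq_or_lt_of_le hj with h | h
        · rw [← h, htop', mul_comm, sub_self]
        · rw [hT.1 j (by omega), hc₂.1 j (by omega), mul_zero, mul_zero, sub_zero]
      have hT₁' := WRep_mono hT₁ hvan
      obtain ⟨e₁, q₁, D₁, y₁, hq₁, hy₁, heq₁⟩ := IH d' (by omega) _ _ hT₁'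
      have heq₁' : ∀ f, pmul (lf μ ^ e₁)
          (pmul (lf μ) (T f) - pmul (c d') (dz^[d' - μ] (Wact m a f)))
            = NFs q₁ D₁ (Wact m a f) + NFs y₁ μ f := heq₁
      set q₂ : ℕ → Polynomial K := fun j => if j = d' - μ then lf μ ^ e₁ * c d' else 0
        with hq₂def
      refine ⟨e₁ + 1, q₁ + q₂, max D₁ (d' - μ + 1), y₁, ?_, hy₁, ?_⟩
      · intro j hj
        have h1 := le_trans (le_max_left D₁ (d' - μ + 1)) hj
        have h2 := le_trans (le_max_right D₁ (d' - μ + 1)) hj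
        have h3 : q₂ j = 0 := by
          simp only [hq₂def]
          exact if_neg (by omega)
        rw [Pi.add_apply, hq₁ j h1, h3, add_zero]
      · intro f
        rw [pow_succ, pmul_mul]
        rw [show pmul (lf μ) (T f)
            = (pmul (lf μ) (T f) - pmul (c d') (dz^[d' - μ] (Wact m a f)))
              + pmul (c d') (dz^[d' - μ] (Wact m a f)) from by abel]
        rw [pmul_add_right, heq₁' f, ← pmul_mul,
          ← NFs_single (lf μ ^ e₁ * c d') (d' - μ) (Wact m a f), ← hq₂def, NFs_add_pi]
        rw [NFs_of_vanish hq₁ (le_max_left D₁ (d' - μ + 1)) (Wact m a f)]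
        rw [NFs_of_vanish (c := q₂)
          (fun j hj => by simp only [hq₂def]; exact if_neg (by omega))
          (le_max_right D₁ (d' - μ + 1)) (Wact m a f)]
        abel

/-! ### `Wact` lemmas -/

lemma Wact_eq_NFs (m' : ℕ) (a' : ℕ → Polynomial K) (f : LS K) :
    Wact m' a' f = NFs (fun j => if j ≤ m' then ((-1 : K) ^ j) • a' j else 0) (m' + 1) f := by
  unfold Wact NFs
  refine Finset.sum_congr rfl fun j hj => ?_
  rw [Finset.mem_range] at hj
  show _ = pmul (if j ≤ m' then ((-1 : K) ^ j) • a' j else 0) (dz^[j] f)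
  rw [if_pos (by omega : j ≤ m'), pmul_smul_left]

lemma Wact_add (m' : ℕ) (a' : ℕ → Polynomial K) (f g : LS K) :
    Wact m' a' (f + g) = Wact m' a' f + Wact m' a' g := by
  unfold Wact
  rw [← Finset.sum_add_distrib]
  exact Finset.sum_congr rfl fun j _ => by rw [dzIter_add, pmul_add_right, smul_add]

lemma Wact_smul (m' : ℕ) (a' : ℕ → Polynomial K) (r : K) (f : LS K) :
    Wact m' a' (r • f) = r • Wact m' a' f := by
  unfold Wact
  rw [Finset.smul_sum]
  exact Finset.sum_congr rfl fun j _ => by rw [dzIter_smul, pmul_smul_right, smul_comm]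

lemma Wact_zero (m' : ℕ) (a' : ℕ → Polynomial K) : Wact m' a' (0 : LS K) = 0 := by
  unfold Wact
  exact Finset.sum_eq_zero fun j _ => by rw [dzIter_zero, pmul_zero_right, smul_zero]

lemma Wact_sub (m' : ℕ) (a' : ℕ → Polynomial K) (f g : LS K) :
    Wact m' a' (f - g) = Wact m' a' f - Wact m' a' g := by
  rw [sub_eq_add_neg, sub_eq_add_neg, Wact_add, ← neg_one_smul K g, Wact_smul, neg_one_smul]

lemma Wact_ofPoly_isPol (m' : ℕ) (a' : ℕ → Polynomial K) (P : Polynomial K) :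
    IsPol (Wact m' a' (ofPoly P)) := by
  unfold Wact
  refine isPol_sum _ _ fun j _ => ?_
  rw [dzIter_ofPoly, pmul_ofPoly, ← ofPoly_smul]
  exact ⟨_, rfl⟩

end AuxiliaryLemmas
set_option synthInstance.maxHeartbeats 1000000 in
set_option maxHeartbeats 1600000 in
/-- Proposition 5.9 (i). If V_1(L) is finite dimensional of positive
dimension, then for every n ≥ 1 the left ideal I_n(L) contains a nonzero operator. -/
theorem stmt_7 {K : Type*} [Field K] [CharZero K] (m : ℕ) (a : ℕ → Polynomial K)
    (hfin : 0 < Module.finrank K (Submodule.span K (V1A (Wact m a)))) :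
    ∀ n : ℕ, 1 ≤ n →
      ∃ (mR : ℕ) (aR : ℕ → Polynomial K), (∃ j ≤ mR, aR j ≠ 0) ∧
        ∀ g ∈ VnA (Wact m a) n, IsPol (Wact mR aR g) := by
  classical
  -- Step 0: some coefficient of `L` is nonzero.
  have hEx : ∃ j, j ≤ m ∧ a j ≠ 0 := by
    by_contra hno
    push_neg at hno
    have hW0 : ∀ f : LS K, Wact m a f = 0 := by
      intro f
      refine Finset.sum_eq_zero fun j hj => ?_
      rw [Finset.mem_range] at hj
      rw [hno j (by omega), pmul_zero_left, smul_zero]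
    haveI hfd : Module.Finite K (Submodule.span K (V1A (Wact m a))) :=
      Module.finite_of_finrank_pos hfin
    haveI hfree : Module.Free K (Submodule.span K (V1A (Wact m a))) :=
      Module.Free.of_divisionRing K _
    set r := Module.finrank K (Submodule.span K (V1A (Wact m a))) with hr
    set v : Fin (r + 1) → LS K := fun i k => if k = ((i : ℕ) : ℤ) + 1 then (1 : K) else 0
      with hv
    have hvmem : ∀ i, v i ∈ V1A (Wact m a) := by
      intro i
      refine ⟨fun k hk => ?_, ?_⟩
      · have hne : ¬(k = ((i : ℕ) : ℤ) + 1) := by omega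
        simp only [hv, hne, if_false]
      · rw [hW0]
        exact isPol_zero
    have hli' : LinearIndependent K v := by
      rw [Fintype.linearIndependent_iff]
      intro g hg i
      have h1 := congrFun hg (((i : ℕ) : ℤ) + 1)
      simp only [Finset.sum_apply, Pi.smul_apply, smul_eq_mul, Pi.zero_apply] at h1
      rw [Finset.sum_eq_single i] at h1
      · simpa [hv] using h1
      · intro b _ hb
        have hne : ¬(((i : ℕ) : ℤ) + 1 = ((b : ℕ) : ℤ) + 1) := by
          intro hcontra
          refine hb (Fin.ext ?_)
          have hbi : ((b : ℕ) : ℤ) = ((i : ℕ) : ℤ) := by omega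
          exact_mod_cast hbi
        simp only [hv, hne, if_false, mul_zero]
      · intro hmem
        exact absurd (Finset.mem_univ i) hmem
    have hliv : LinearIndependent K
        (fun i => (⟨v i, Submodule.subset_span (hvmem i)⟩ :
          (Submodule.span K (V1A (Wact m a))))) := by
      apply LinearIndependent.of_comp (Submodule.span K (V1A (Wact m a))).subtype
      exact hli'
    have hcard := hliv.fintype_card_le_finrank
    rw [Fintype.card_fin] at hcard
    omega
  obtain ⟨j₀, hj₀m, hj₀⟩ := hEx
  intro n hn
  -- Step 1: top order `μ` and leading coefficient of `L`.
  set s0 : Finset ℕ := (Finset.range (m + 1)).filter (fun j => a j ≠ 0) with hs0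
  have hsne : s0.Nonempty :=
    ⟨j₀, Finset.mem_filter.mpr ⟨Finset.mem_range.mpr (by omega), hj₀⟩⟩
  set μ := s0.max' hsne with hμdef
  obtain ⟨hμmem, haμ⟩ := Finset.mem_filter.mp (s0.max'_mem hsne)
  have hμm : μ ≤ m := by
    have := Finset.mem_range.mp hμmem
    omega
  have hamax : ∀ j, μ < j → j ≤ m → a j = 0 := by
    intro j h1 h2
    by_contra hne
    have hjs : j ∈ s0 := Finset.mem_filter.mpr ⟨Finset.mem_range.mpr (by omega), hne⟩
    have := s0.le_max' j hjs
    omega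
  set lf : ℕ → Polynomial K := fun j => if j ≤ m then ((-1 : K) ^ j) • a j else 0 with hlf
  have hlf0 : ∀ j, μ + 1 ≤ j → lf j = 0 := by
    intro j hj
    simp only [hlf]
    by_cases hjm : j ≤ m
    · rw [if_pos hjm, hamax j (by omega) hjm, smul_zero]
    · rw [if_neg hjm]
  have hRepL : WRep (Wact m a) lf (μ + 1) := by
    refine ⟨hlf0, fun f => ?_⟩
    rw [Wact_eq_NFs, ← hlf]
    exact NFs_of_vanish hlf0 (by omega) f
  have hbne : lf μ ≠ 0 := by
    simp only [hlf, if_pos hμm]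
    exact smul_ne_zero (pow_ne_zero _ (neg_ne_zero.mpr one_ne_zero)) haμ
  -- Step 2: pseudo-divide all `∂^i ∘ z^u` by `L`.
  have key : ∀ i u : ℕ, ∃ (e : ℕ) (q : ℕ → Polynomial K) (Dq : ℕ) (y : ℕ → Polynomial K),
      (∀ j, Dq ≤ j → q j = 0) ∧ (∀ j, μ ≤ j → y j = 0) ∧
      ∀ f : LS K, pmul (lf μ ^ e) (dz^[i] (pmul (Polynomial.X ^ u) f))
        = NFs q Dq (Wact m a f) + NFs y μ f := by
    intro i u
    obtain ⟨c', hc', -⟩ := WRep_dzIter (WRep_pmulP (Polynomial.X ^ u : Polynomial K)) le_rfl i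
    obtain ⟨e, q, Dq, y, h1, h2, h3⟩ := red hRepL (1 + i) _ _ hc'
    exact ⟨e, q, Dq, y, h1, h2, fun f => h3 f⟩
  choose e q Dq y hq hy hEq using key
  set S := n * μ with hS
  set E := ((Finset.range (S + 1)) ×ˢ (Finset.range n)).sup (fun p => e p.1 p.2) with hE
  have hEle : ∀ i u : ℕ, i < S + 1 → u < n → e i u ≤ E := by
    intro i u hi hu
    rw [hE]
    have hmem : (i, u) ∈ (Finset.range (S + 1)) ×ˢ (Finset.range n) :=
      Finset.mem_product.mpr ⟨Finset.mem_range.mpr hi, Finset.mem_range.mpr hu⟩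
    exact Finset.le_sup (f := fun p : ℕ × ℕ => e p.1 p.2) hmem
  -- Step 3: linear algebra over the fraction field.
  set w : Fin (S + 1) → (Fin n × Fin μ → FractionRing (Polynomial K)) :=
    fun i p => algebraMap (Polynomial K) (FractionRing (Polynomial K))
      (lf μ ^ (E - e (i : ℕ) ((p.1 : ℕ))) * y (i : ℕ) ((p.1 : ℕ)) ((p.2 : ℕ))) with hw
  have hnli : ¬ LinearIndependent (FractionRing (Polynomial K)) w := by
    intro hli
    have h1 := hli.fintype_card_le_finrank
    rw [Module.finrank_pi, Fintype.card_fin, Fintype.card_prod, Fintype.card_fin,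
      Fintype.card_fin] at h1
    omega
  obtain ⟨γ, hγ, i₀, hγ₀⟩ := Fintype.not_linearIndependent_iff.mp hnli
  obtain ⟨ρ, hρ⟩ := IsLocalization.exist_integer_multiples
    (nonZeroDivisors (Polynomial K)) Finset.univ γ
  have hInt : ∀ i : Fin (S + 1), ∃ c : Polynomial K,
      algebraMap (Polynomial K) (FractionRing (Polynomial K)) c = (ρ : Polynomial K) • γ i :=
    fun i => RingHom.mem_rangeS.mp (hρ i (Finset.mem_univ i))
  choose cp hcp using hInt
  have hρne : (ρ : Polynomial K) ≠ 0 := nonZeroDivisors.ne_zero ρ.2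
  have hcp₀ : cp i₀ ≠ 0 := by
    intro h0
    have h1 := hcp i₀
    rw [h0, map_zero, Algebra.smul_def] at h1
    rcases mul_eq_zero.mp h1.symm with h3 | h3
    · exact hρne ((map_eq_zero_iff _
        (IsFractionRing.injective (Polynomial K) (FractionRing (Polynomial K)))).mp h3)
    · exact hγ₀ h3
  set cpN : ℕ → Polynomial K := fun i => if h : i < S + 1 then cp ⟨i, h⟩ else 0 with hcpN
  have hcpN' : ∀ i : Fin (S + 1), cpN (i : ℕ) = cp i := by
    intro i
    simp [hcpN, i.isLt]
    exact fun h => absurd i.isLt (by omega)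
  have hrel : ∀ u : ℕ, u < n → ∀ j : ℕ, j < μ →
      ∑ i ∈ Finset.range (S + 1), cpN i * (lf μ ^ (E - e i u) * y i u j) = 0 := by
    intro u hu j hj
    apply IsFractionRing.injective (Polynomial K) (FractionRing (Polynomial K))
    rw [map_sum, map_zero]
    rw [← Fin.sum_univ_eq_sum_range (fun i => algebraMap (Polynomial K)
      (FractionRing (Polynomial K)) (cpN i * (lf μ ^ (E - e i u) * y i u j))) (S + 1)]
    have h1 : ∀ i : Fin (S + 1),
        algebraMap (Polynomial K) (FractionRing (Polynomial K))
            (cpN (i : ℕ) * (lf μ ^ (E - e (i : ℕ) u) * y (i : ℕ) u j))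
          = algebraMap (Polynomial K) (FractionRing (Polynomial K)) (ρ : Polynomial K)
            * (γ i * w i (⟨u, hu⟩, ⟨j, hj⟩)) := by
      intro i
      rw [map_mul, hcpN' i, hcp i, Algebra.smul_def]
      have h2 : w i (⟨u, hu⟩, ⟨j, hj⟩)
          = algebraMap (Polynomial K) (FractionRing (Polynomial K))
              (lf μ ^ (E - e (i : ℕ) u) * y (i : ℕ) u j) := by
        simp only [hw]
      rw [h2]
      ring
    rw [Finset.sum_congr rfl (fun i _ => h1 i), ← Finset.mul_sum]
    have h3 : ∑ i : Fin (S + 1), γ i * w i (⟨u, hu⟩, ⟨j, hj⟩) = 0 := by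
      have h4 := congrFun hγ (⟨u, hu⟩, ⟨j, hj⟩)
      simpa [Finset.sum_apply] using h4
    rw [h3, mul_zero]
  -- Step 4: the operator `R`.
  set aR : ℕ → Polynomial K := fun i => ((-1 : K) ^ i) • (cpN i * lf μ ^ E) with haR
  have hMain : ∀ u : ℕ, u < n → ∀ f : LS K,
      Wact S aR (pmul (Polynomial.X ^ u) f)
        = ∑ i ∈ Finset.range (S + 1),
            NFs (fun j => cpN i * lf μ ^ (E - e i u) * q i u j) (Dq i u) (Wact m a f) := by
    intro u hu f
    have hterm : ∀ i ∈ Finset.range (S + 1),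
        ((-1 : K) ^ i) • pmul (aR i) (dz^[i] (pmul (Polynomial.X ^ u) f))
          = NFs (fun j => cpN i * lf μ ^ (E - e i u) * q i u j) (Dq i u) (Wact m a f)
            + NFs (fun j => cpN i * lf μ ^ (E - e i u) * y i u j) μ f := by
      intro i hi
      rw [Finset.mem_range] at hi
      simp only [haR]
      rw [pmul_smul_left, smul_smul,
        show ((-1 : K) ^ i * (-1 : K) ^ i) = 1 from by
          rw [← pow_add]; exact Even.neg_one_pow ⟨i, rfl⟩,
        one_smul,
        show cpN i * lf μ ^ E = cpN i * lf μ ^ (E - e i u) * lf μ ^ (e i u) from by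
          rw [mul_assoc, pow_sub_mul_pow _ (hEle i u hi hu)],
        pmul_mul, hEq i u f, pmul_add_right, pmul_NFs, pmul_NFs]
    have hzero : ∑ i ∈ Finset.range (S + 1),
        NFs (fun j => cpN i * lf μ ^ (E - e i u) * y i u j) μ f = 0 := by
      unfold NFs
      rw [Finset.sum_comm]
      refine Finset.sum_eq_zero fun j hj => ?_
      rw [Finset.mem_range] at hj
      rw [← pmul_sum_left]
      have h5 : ∑ i ∈ Finset.range (S + 1), cpN i * lf μ ^ (E - e i u) * y i u j = 0 := by
        rw [← hrel u hu j hj]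
        exact Finset.sum_congr rfl fun i _ => by ring
      rw [h5, pmul_zero_left]
    calc Wact S aR (pmul (Polynomial.X ^ u) f)
        = ∑ i ∈ Finset.range (S + 1),
            ((-1 : K) ^ i) • pmul (aR i) (dz^[i] (pmul (Polynomial.X ^ u) f)) := rfl
      _ = ∑ i ∈ Finset.range (S + 1),
            (NFs (fun j => cpN i * lf μ ^ (E - e i u) * q i u j) (Dq i u) (Wact m a f)
              + NFs (fun j => cpN i * lf μ ^ (E - e i u) * y i u j) μ f) :=
        Finset.sum_congr rfl hterm
      _ = (∑ i ∈ Finset.range (S + 1),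
            NFs (fun j => cpN i * lf μ ^ (E - e i u) * q i u j) (Dq i u) (Wact m a f))
          + ∑ i ∈ Finset.range (S + 1),
            NFs (fun j => cpN i * lf μ ^ (E - e i u) * y i u j) μ f :=
        Finset.sum_add_distrib
      _ = _ := by rw [hzero, add_zero]
  refine ⟨S, aR, ⟨(i₀ : ℕ), Nat.lt_succ_iff.mp i₀.isLt, ?_⟩, ?_⟩
  · simp only [haR]
    refine smul_ne_zero (pow_ne_zero _ (neg_ne_zero.mpr one_ne_zero)) ?_
    refine mul_ne_zero ?_ (pow_ne_zero _ hbne)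
    rw [hcpN' i₀]
    exact hcp₀
  · intro g hg
    have hg' : g ∈ Submodule.span K
        {g | ∃ k < n, ∃ f ∈ V1A (Wact m a), g = piProj (zmul^[k] f)} := hg
    clear hg
    induction hg' using Submodule.span_induction with
    | mem x hx =>
      obtain ⟨k, hkn, f, hfV, rfl⟩ := hx
      obtain ⟨hfT, hfP⟩ := hfV
      have hzp : zmul^[k] f = pmul (Polynomial.X ^ k) f := (pmul_X_pow k f).symm
      have hdec : piProj (zmul^[k] f)
          = pmul (Polynomial.X ^ k) f - (fun j => if 1 ≤ j then (0 : K) else zmul^[k] f j) := by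
        funext j
        rw [Pi.sub_apply, ← hzp]
        show (if 1 ≤ j then zmul^[k] f j else 0)
          = zmul^[k] f j - (if 1 ≤ j then (0 : K) else zmul^[k] f j)
        split_ifs with h
        · rw [sub_zero]
        · rw [sub_self]
      have hrpol : IsPol (fun j => if 1 ≤ j then (0 : K) else zmul^[k] f j) := by
        refine isPol_of_vanish _ k (fun j hj => by simp only [if_pos hj]) (fun j hj => ?_)
        simp only [if_neg (show ¬(1 ≤ j) from by omega)]
        rw [zmul_iter_apply]
        exact hfT _ (by omega)
      rw [hdec, Wact_sub]
      refine isPol_sub ?_ ?_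
      · obtain ⟨Pf, hPf⟩ := hfP
        rw [hMain k hkn f, hPf]
        exact isPol_sum _ _ fun i _ => NFs_ofPoly_isPol _ _ _
      · obtain ⟨Pr, hPr⟩ := hrpol
        rw [hPr]
        exact Wact_ofPoly_isPol _ _ _
    | zero =>
      rw [Wact_zero]
      exact isPol_zero
    | add x y hx hy ihx ihy =>
      rw [Wact_add]
      exact isPol_add ihx ihy
    | smul c x hx ih =>
      rw [Wact_smul]
      exact isPol_smul c ih
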